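/- Let p be prime, j,k ≥ 0, and let r, r', m, m', n₂ be integers with p ∤ r r' m m'. Then the complete character sum 𝔠_p = Σ_{β mod p^{j+k}} S(\bar{mr}, β·\bar r; p^j) · S(\bar{m'r'}, β·\bar{r'}; p^k) · e(β·\bar{rr'} n₂ / p^{j+k}) satisfies |𝔠_p| ≤ p^{j+k}·gcd(p^j, p^k, n₂)·C for some absolute constant C; moreover it vanishes unless gcd(p^j,p^k) | n₂. -/

import Mathlib

/-!
Open both Kloosterman sums and sum over `β` first: the `β`-sum is a complete additive character
sum modulo `p^(j+k)`, equal to `p^(j+k)` when `(α, γ)` solves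
`p^k r̄ ᾱ + p^j r̄' γ̄ + \bar{rr'} n₂ ≡ 0 (mod p^(j+k))` and `0` otherwise. So `𝔠_p` is `p^(j+k)`
times a sum of unimodular terms over the solutions. Reducing the congruence modulo
`gcd(p^j, p^k)` shows that there are none unless `gcd(p^j, p^k) ∣ n₂`; reducing it modulo `p^k`
(resp. `p^j`) shows that `α` determines `γ` (resp. `γ` determines `α`), so there are at most
`min(p^j, p^k) = gcd(p^j, p^k)` solutions. Hence `C = 1` works.
-/

open scoped Classical

noncomputable def e2 (x : ℝ) : ℂ := Complex.exp (2 * Real.pi * Complex.I * x)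

/-- The Kloosterman sum `S(a,b;c) = Σ*_{α mod c} e((aα + b ᾱ)/c)`. -/
noncomputable def kloos (a b : ℤ) (c : ℕ) : ℂ :=
  ∑ α ∈ Finset.range c, if Nat.Coprime α c then
    e2 (((a * α + b * ((((α : ZMod c)⁻¹).val : ℕ) : ℤ) : ℤ) : ℝ) / (c : ℝ)) else 0

/-- The `p`-part character sum
`𝔠_p = Σ_{β mod p^{j+k}} S(\bar{mr}, β r̄; p^j) S(\bar{m'r'}, β r̄'; p^k) e(β \bar{rr'} n₂/p^{j+k})`. -/
noncomputable def charSumP (p j k : ℕ) (r r' m m' n₂ : ℤ) : ℂ :=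
  ∑ β ∈ Finset.range (p ^ (j + k)),
    kloos ((((m * r : ZMod (p ^ j))⁻¹).val : ℤ))
      ((β : ℤ) * (((r : ZMod (p ^ j))⁻¹).val : ℤ)) (p ^ j) *
    kloos ((((m' * r' : ZMod (p ^ k))⁻¹).val : ℤ))
      ((β : ℤ) * (((r' : ZMod (p ^ k))⁻¹).val : ℤ)) (p ^ k) *
    e2 ((((β : ℤ) * (((r * r' : ZMod (p ^ (j + k)))⁻¹).val : ℤ) * n₂ : ℤ) : ℝ) /
      ((p ^ (j + k) : ℕ) : ℝ))

open Finset

lemma e2_add (x y : ℝ) : e2 (x + y) = e2 x * e2 y := by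
  simp only [e2, ← Complex.exp_add]
  push_cast
  ring_nf

lemma norm_e2 (x : ℝ) : ‖e2 x‖ = 1 := by
  rw [e2, ← Complex.norm_exp_ofReal_mul_I (2 * Real.pi * x)]
  push_cast
  ring_nf

lemma e2_natCast_mul (n : ℕ) (x : ℝ) : e2 (n * x) = e2 x ^ n := by
  simp only [e2, ← Complex.exp_nat_mul]
  push_cast
  ring_nf

lemma e2_eq_one_iff (x : ℝ) : e2 x = 1 ↔ ∃ n : ℤ, x = n := by
  have h2πI : 2 * (Real.pi : ℂ) * Complex.I ≠ 0 := by simp [Real.pi_ne_zero]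
  rw [e2, Complex.exp_eq_one_iff]
  refine exists_congr fun n => ?_
  rw [mul_comm _ (x : ℂ), mul_left_inj' h2πI]
  exact_mod_cast Iff.rfl

lemma e2_intCast_div_eq_one_iff {N : ℕ} (hN : N ≠ 0) (M : ℤ) :
    e2 (M / N) = 1 ↔ (N : ℤ) ∣ M := by
  have hN' : (N : ℝ) ≠ 0 := by exact_mod_cast hN
  rw [e2_eq_one_iff]
  refine exists_congr fun n => ?_
  rw [div_eq_iff hN', mul_comm]
  exact_mod_cast Iff.rfl

lemma sum_range_e2_mul_div {N : ℕ} (hN : N ≠ 0) (M : ℤ) :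
    ∑ β ∈ range N, e2 (((β : ℤ) * M : ℤ) / N) = if (N : ℤ) ∣ M then (N : ℂ) else 0 := by
  have hpow : ∀ β : ℕ, e2 (((β : ℤ) * M : ℤ) / N) = e2 (M / N) ^ β := fun β => by
    rw [← e2_natCast_mul]
    push_cast
    ring_nf
  simp only [hpow]
  split_ifs with hdvd
  · simp [(e2_intCast_div_eq_one_iff hN M).mpr hdvd]
  · have hz : e2 (M / N) ^ N = 1 := by
      rw [← e2_natCast_mul, mul_div_cancel₀ _ (by exact_mod_cast hN), e2_eq_one_iff]
      exact ⟨M, rfl⟩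
    rw [geom_sum_eq (mt (e2_intCast_div_eq_one_iff hN M).mp hdvd), hz, sub_self, zero_div]

/-- The paper's `x̄` modulo `c`, as an integer in `[0, c)`. -/
def invRep (c : ℕ) (x : ZMod c) : ℤ := (x⁻¹.val : ℤ)

lemma intCast_invRep {c : ℕ} [NeZero c] (x : ZMod c) : ((invRep c x : ℤ) : ZMod c) = x⁻¹ := by
  rw [invRep, Int.cast_natCast, ZMod.natCast_zmod_val]

lemma natCast_eq_of_inv_eq {c γ₁ γ₂ : ℕ} (h₁ : γ₁.Coprime c) (h₂ : γ₂.Coprime c)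
    (h : (γ₁ : ZMod c)⁻¹ = (γ₂ : ZMod c)⁻¹) : (γ₁ : ZMod c) = γ₂ := by
  rw [← ZMod.coe_unitOfCoprime γ₁ h₁, ← ZMod.coe_unitOfCoprime γ₂ h₂, ZMod.inv_coe_unit,
    ZMod.inv_coe_unit, Units.val_inj, inv_inj] at h
  rw [← ZMod.coe_unitOfCoprime γ₁ h₁, ← ZMod.coe_unitOfCoprime γ₂ h₂, h]

lemma eq_of_dvd_mul_sub_invRep {c : ℕ} [NeZero c] {s : ℤ} (hs : IsUnit (s : ZMod c))
    {γ₁ γ₂ : ℕ} (hlt₁ : γ₁ < c) (hlt₂ : γ₂ < c) (h₁ : γ₁.Coprime c) (h₂ : γ₂.Coprime c)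
    (hd : (c : ℤ) ∣ s * (invRep c γ₁ - invRep c γ₂)) : γ₁ = γ₂ := by
  rw [← ZMod.intCast_zmod_eq_zero_iff_dvd, Int.cast_mul, Int.cast_sub, intCast_invRep,
    intCast_invRep, hs.mul_right_eq_zero, sub_eq_zero] at hd
  have := congrArg ZMod.val (natCast_eq_of_inv_eq h₁ h₂ hd)
  rwa [ZMod.val_cast_of_lt hlt₁, ZMod.val_cast_of_lt hlt₂] at this

lemma kloos_eq (a b : ℤ) (c : ℕ) :
    kloos a b c =
      ∑ α ∈ range c, if α.Coprime c then e2 ((a * α + b * invRep c α : ℤ) / c) else 0 :=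
  rfl

section KloostermanProduct

variable (J K : ℕ)

def coprimePairs : Finset (ℕ × ℕ) :=
  (range J ×ˢ range K).filter fun q => q.1.Coprime J ∧ q.2.Coprime K

/-- The phase `K s ᾱ + J s' γ̄ + c`: after expanding both Kloosterman sums, the twisted
`β`-sum becomes `∑_β e(β ⬝ kloosPhase (α, γ) / JK)`. -/
def kloosPhase (s s' c : ℤ) (q : ℕ × ℕ) : ℤ :=
  K * s * invRep J q.1 + J * s' * invRep K q.2 + c

def kloosSolutions (s s' c : ℤ) : Finset (ℕ × ℕ) :=
  (coprimePairs J K).filter fun q => ((J * K : ℕ) : ℤ) ∣ kloosPhase J K s s' c q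

lemma kloos_mul_kloos (a b a' b' : ℤ) :
    kloos a b J * kloos a' b' K = ∑ q ∈ coprimePairs J K,
      e2 ((a * q.1 + b * invRep J q.1 : ℤ) / J) * e2 ((a' * q.2 + b' * invRep K q.2 : ℤ) / K) := by
  rw [kloos_eq, kloos_eq, sum_mul_sum, ← sum_product', coprimePairs, sum_filter]
  simp only [ite_zero_mul_ite_zero]

variable {J K} [NeZero J] [NeZero K]

lemma e2_mul_e2_mul_e2_eq_kloosPhase (a a' s s' t n β : ℤ) (q : ℕ × ℕ) :
    e2 ((a * q.1 + β * s * invRep J q.1 : ℤ) / J) *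
        e2 ((a' * q.2 + β * s' * invRep K q.2 : ℤ) / K) *
        e2 ((β * t * n : ℤ) / ((J * K : ℕ) : ℝ)) =
      e2 ((a * q.1 : ℤ) / J) * e2 ((a' * q.2 : ℤ) / K) *
        e2 ((β * kloosPhase J K s s' (t * n) q : ℤ) / ((J * K : ℕ) : ℝ)) := by
  have hJ : (J : ℝ) ≠ 0 := NeZero.ne _
  have hK : (K : ℝ) ≠ 0 := NeZero.ne _
  simp only [← e2_add, kloosPhase]
  congr 1
  push_cast
  field_simp
  ring

theorem sum_kloos_mul_kloos_mul_e2 (a a' s s' t n : ℤ) :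
    ∑ β ∈ range (J * K), kloos a (β * s) J * kloos a' (β * s') K *
        e2 ((β * t * n : ℤ) / ((J * K : ℕ) : ℝ)) =
      (J * K : ℕ) * ∑ q ∈ kloosSolutions J K s s' (t * n),
        e2 ((a * q.1 : ℤ) / J) * e2 ((a' * q.2 : ℤ) / K) := by
  calc _ = ∑ q ∈ coprimePairs J K, ∑ β ∈ range (J * K),
        e2 ((a * q.1 : ℤ) / J) * e2 ((a' * q.2 : ℤ) / K) *
          e2 ((β * kloosPhase J K s s' (t * n) q : ℤ) / ((J * K : ℕ) : ℝ)) := by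
        rw [sum_comm]
        refine sum_congr rfl fun β _ => ?_
        rw [kloos_mul_kloos, sum_mul]
        exact sum_congr rfl fun q _ => e2_mul_e2_mul_e2_eq_kloosPhase ..
    _ = _ := by
        rw [kloosSolutions, sum_filter, mul_sum]
        refine sum_congr rfl fun q _ => ?_
        rw [← mul_sum, sum_range_e2_mul_div (NeZero.ne _)]
        split_ifs <;> ring

omit [NeZero J] [NeZero K] in
lemma mem_kloosSolutions {s s' c : ℤ} {q : ℕ × ℕ} :
    q ∈ kloosSolutions J K s s' c ↔ (q.1 < J ∧ q.2 < K) ∧ (q.1.Coprime J ∧ q.2.Coprime K) ∧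
      ((J * K : ℕ) : ℤ) ∣ kloosPhase J K s s' c q := by
  simp only [kloosSolutions, coprimePairs, mem_filter, mem_product, mem_range, and_assoc]

variable {s s' c : ℤ}

lemma snd_eq_of_fst_eq (hs' : IsUnit (s' : ZMod K)) {q₁ q₂ : ℕ × ℕ}
    (h₁ : q₁ ∈ kloosSolutions J K s s' c) (h₂ : q₂ ∈ kloosSolutions J K s s' c)
    (h : q₁.1 = q₂.1) : q₁.2 = q₂.2 := by
  obtain ⟨⟨-, hlt₁⟩, ⟨-, hc₁⟩, hd₁⟩ := mem_kloosSolutions.mp h₁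
  obtain ⟨⟨-, hlt₂⟩, ⟨-, hc₂⟩, hd₂⟩ := mem_kloosSolutions.mp h₂
  have hd := dvd_sub hd₁ hd₂
  rw [show kloosPhase J K s s' c q₁ - kloosPhase J K s s' c q₂ =
      J * (s' * (invRep K q₁.2 - invRep K q₂.2)) by simp only [kloosPhase, h]; ring,
    Nat.cast_mul, mul_dvd_mul_iff_left (by exact_mod_cast NeZero.ne J)] at hd
  exact eq_of_dvd_mul_sub_invRep hs' hlt₁ hlt₂ hc₁ hc₂ hd

lemma fst_eq_of_snd_eq (hs : IsUnit (s : ZMod J)) {q₁ q₂ : ℕ × ℕ}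
    (h₁ : q₁ ∈ kloosSolutions J K s s' c) (h₂ : q₂ ∈ kloosSolutions J K s s' c)
    (h : q₁.2 = q₂.2) : q₁.1 = q₂.1 := by
  obtain ⟨⟨hlt₁, -⟩, ⟨hc₁, -⟩, hd₁⟩ := mem_kloosSolutions.mp h₁
  obtain ⟨⟨hlt₂, -⟩, ⟨hc₂, -⟩, hd₂⟩ := mem_kloosSolutions.mp h₂
  have hd := dvd_sub hd₁ hd₂
  rw [show kloosPhase J K s s' c q₁ - kloosPhase J K s s' c q₂ =
      K * (s * (invRep J q₁.1 - invRep J q₂.1)) by simp only [kloosPhase, h]; ring,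
    mul_comm J, Nat.cast_mul, mul_dvd_mul_iff_left (by exact_mod_cast NeZero.ne K)] at hd
  exact eq_of_dvd_mul_sub_invRep hs hlt₁ hlt₂ hc₁ hc₂ hd

lemma card_kloosSolutions_le_left (hs' : IsUnit (s' : ZMod K)) :
    #(kloosSolutions J K s s' c) ≤ J := by
  simpa using card_le_card_of_injOn Prod.fst
    (fun q hq => mem_range.mpr (mem_kloosSolutions.mp hq).1.1)
    (fun q₁ h₁ q₂ h₂ h => Prod.ext h (snd_eq_of_fst_eq hs' h₁ h₂ h))

lemma card_kloosSolutions_le_right (hs : IsUnit (s : ZMod J)) :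
    #(kloosSolutions J K s s' c) ≤ K := by
  simpa using card_le_card_of_injOn Prod.snd
    (fun q hq => mem_range.mpr (mem_kloosSolutions.mp hq).1.2)
    (fun q₁ h₁ q₂ h₂ h => Prod.ext (fst_eq_of_snd_eq hs h₁ h₂ h) h)

lemma card_kloosSolutions_le_gcd (hs : IsUnit (s : ZMod J)) (hs' : IsUnit (s' : ZMod K))
    (hJK : J ∣ K ∨ K ∣ J) : #(kloosSolutions J K s s' c) ≤ J.gcd K := by
  rcases hJK with h | h
  · rw [Nat.gcd_eq_left h]
    exact card_kloosSolutions_le_left hs'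
  · rw [Nat.gcd_eq_right h]
    exact card_kloosSolutions_le_right hs

omit [NeZero J] [NeZero K] in
/-- `gcd(J, K)` divides `JK`, `K x` and `J y`, hence `t n`, and `t` is prime to it. -/
lemma kloosSolutions_eq_empty {t n : ℤ} (ht : IsUnit (t : ZMod (J * K)))
    (hn : ¬ ((J.gcd K : ℕ) : ℤ) ∣ n) : kloosSolutions J K s s' (t * n) = ∅ := by
  refine eq_empty_of_forall_notMem fun q hq => hn ?_
  have hd := (mem_kloosSolutions.mp hq).2.2
  have hg : ((J.gcd K : ℕ) : ℤ) ∣ ((J * K : ℕ) : ℤ) :=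
    Int.natCast_dvd_natCast.mpr ((Nat.gcd_dvd_left J K).mul_right K)
  have hgJ : ((J.gcd K : ℕ) : ℤ) ∣ J := Int.natCast_dvd_natCast.mpr (Nat.gcd_dvd_left J K)
  have hgK : ((J.gcd K : ℕ) : ℤ) ∣ K := Int.natCast_dvd_natCast.mpr (Nat.gcd_dvd_right J K)
  have htn : ((J.gcd K : ℕ) : ℤ) ∣ t * n := by
    have := hg.trans hd
    rw [kloosPhase, mul_assoc (K : ℤ), mul_assoc (J : ℤ)] at this
    exact (dvd_add_right ((dvd_mul_of_dvd_left hgK _).add (dvd_mul_of_dvd_left hgJ _))).mp this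
  have htg : IsCoprime ((J.gcd K : ℕ) : ℤ) t :=
    ((ZMod.coe_int_isUnit_iff_isCoprime t _).mp ht).of_isCoprime_of_dvd_left hg
  exact htg.dvd_of_dvd_mul_left htn

end KloostermanProduct

lemma norm_natCast_mul_sum_e2_mul_e2_le {ι : Type*} (N : ℕ) (S : Finset ι) (f g : ι → ℝ) :
    ‖(N : ℂ) * ∑ q ∈ S, e2 (f q) * e2 (g q)‖ ≤ N * #S := by
  rw [norm_mul, Complex.norm_natCast]
  gcongr
  calc _ ≤ ∑ q ∈ S, ‖e2 (f q) * e2 (g q)‖ := norm_sum_le _ _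
    _ = #S := by simp [norm_e2]

lemma isUnit_intCast_invRep {c : ℕ} [NeZero c] {x : ZMod c} (hx : IsUnit x) :
    IsUnit ((invRep c x : ℤ) : ZMod c) := by
  rw [intCast_invRep, ← hx.unit_spec, ZMod.inv_coe_unit]
  exact Units.isUnit _

lemma isUnit_intCast_zmod_prime_pow {p : ℕ} (hp : p.Prime) {r : ℤ} (hr : ¬ (p : ℤ) ∣ r) (n : ℕ) :
    IsUnit (r : ZMod (p ^ n)) := by
  rw [ZMod.coe_int_isUnit_iff_isCoprime, Nat.cast_pow]
  exact ((Nat.prime_iff_prime_int.mp hp).coprime_iff_not_dvd.mpr hr).pow_left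

lemma charSumP_eq (p j k : ℕ) [NeZero p] (r r' m m' n₂ : ℤ) :
    charSumP p j k r r' m m' n₂ = ((p ^ j * p ^ k : ℕ) : ℂ) *
      ∑ q ∈ kloosSolutions (p ^ j) (p ^ k) (invRep (p ^ j) r) (invRep (p ^ k) r')
        (invRep (p ^ j * p ^ k) (r * r') * n₂),
        e2 ((invRep (p ^ j) (m * r) * q.1 : ℤ) / (p ^ j : ℕ)) *
          e2 ((invRep (p ^ k) (m' * r') * q.2 : ℤ) / (p ^ k : ℕ)) := by
  rw [charSumP, pow_add]
  exact sum_kloos_mul_kloos_mul_e2 ..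

/-- `|𝔠_p| ≤ C · p^{j+k} · gcd(p^j, p^k, n₂)` for an absolute constant `C`, and `𝔠_p`
vanishes unless `gcd(p^j, p^k) ∣ n₂`. -/
theorem stmt_3 :
    ∃ C : ℝ, 0 < C ∧
      ∀ (p : ℕ), p.Prime → ∀ (j k : ℕ) (r r' m m' n₂ : ℤ),
        ¬ ((p : ℤ) ∣ r * r' * m * m') →
        ‖charSumP p j k r r' m m' n₂‖ ≤
          C * ((p : ℝ) ^ (j + k)) * ((Nat.gcd (Nat.gcd (p ^ j) (p ^ k)) n₂.natAbs : ℕ) : ℝ) ∧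
        (¬ (((Nat.gcd (p ^ j) (p ^ k) : ℕ) : ℤ) ∣ n₂) → charSumP p j k r r' m m' n₂ = 0) := by
  refine ⟨1, one_pos, fun p hp j k r r' m m' n₂ hcop => ?_⟩
  have : NeZero p := ⟨hp.ne_zero⟩
  have hr : ¬ (p : ℤ) ∣ r := fun h => hcop (((h.mul_right r').mul_right m).mul_right m')
  have hr' : ¬ (p : ℤ) ∣ r' := fun h => hcop (((h.mul_left r).mul_right m).mul_right m')
  have hs := isUnit_intCast_invRep (isUnit_intCast_zmod_prime_pow hp hr j)
  have hs' := isUnit_intCast_invRep (isUnit_intCast_zmod_prime_pow hp hr' k)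
  have ht : IsUnit ((invRep (p ^ j * p ^ k) (r * r') : ℤ) : ZMod (p ^ j * p ^ k)) := by
    refine isUnit_intCast_invRep ?_
    rw [← pow_add, ← Int.cast_mul]
    exact isUnit_intCast_zmod_prime_pow hp (fun h => hcop ((h.mul_right m).mul_right m')) _
  have hzero (hn : ¬ (((Nat.gcd (p ^ j) (p ^ k) : ℕ) : ℤ) ∣ n₂)) :
      charSumP p j k r r' m m' n₂ = 0 := by
    rw [charSumP_eq, kloosSolutions_eq_empty ht hn, sum_empty, mul_zero]
  refine ⟨?_, hzero⟩
  by_cases hn : ((Nat.gcd (p ^ j) (p ^ k) : ℕ) : ℤ) ∣ n₂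
  · rw [Nat.gcd_eq_left (Int.natCast_dvd.mp hn)]
    have hpow : p ^ j ∣ p ^ k ∨ p ^ k ∣ p ^ j :=
      (le_total j k).imp (pow_dvd_pow p) (pow_dvd_pow p)
    calc _ ≤ _ := charSumP_eq p j k r r' m m' n₂ ▸ norm_natCast_mul_sum_e2_mul_e2_le _ _ _ _
      _ ≤ ((p ^ j * p ^ k : ℕ) : ℝ) * (Nat.gcd (p ^ j) (p ^ k) : ℕ) := by
          gcongr
          exact card_kloosSolutions_le_gcd hs hs' hpow
      _ = _ := by push_cast; ring
  · rw [hzero hn, norm_zero]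
    positivity
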